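/- arXiv:1011.6325 — 2 statements merged into one kernel-verified Lean document; each statement's English description precedes it below -/
import Mathlib

section
/- Let A, B be positive definite Hermitian matrices, C, D positive semidefinite Hermitian matrices, and X a Hermitian matrix. Then Tr(X A⁻¹ X B⁻¹) − Tr(X (A+C)⁻¹ X (B+D)⁻¹) ≥ 0. -/
/-!
Write `A' = A + C` and `B' = B + D`. Matrix inversion is operator antitone, so `A'⁻¹ ≤ A⁻¹` and
`B'⁻¹ ≤ B⁻¹` in the Loewner order, and conjugating by the Hermitian `X` gives
`0 ≤ X A'⁻¹ X ≤ X A⁻¹ X`. The trace of a product of two positive semidefinite matrices is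
nonnegative, so `(P, Q) ↦ Tr (P Q)` is monotone in each argument on positive semidefinite
matrices, whence `Tr (X A'⁻¹ X B'⁻¹) ≤ Tr (X A⁻¹ X B⁻¹)`.
-/

open Matrix ComplexOrder

namespace Matrix

open scoped MatrixOrder

variable {m 𝕜 : Type*} [Fintype m] [RCLike 𝕜]

theorem PosSemidef.trace_mul_nonneg {P Q : Matrix m m 𝕜}
    (hP : P.PosSemidef) (hQ : Q.PosSemidef) : 0 ≤ (P * Q).trace := by
  classical
  obtain ⟨S, rfl⟩ := CStarAlgebra.nonneg_iff_eq_star_mul_self.mp hQ.nonneg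
  rw [star_eq_conjTranspose, ← Matrix.mul_assoc, trace_mul_comm]
  simpa only [Matrix.mul_assoc] using (hP.mul_mul_conjTranspose_same S).trace_nonneg

theorem trace_mul_le_trace_mul {P P' Q Q' : Matrix m m 𝕜}
    (hP : 0 ≤ P) (hPP' : P ≤ P') (hQ : 0 ≤ Q) (hQQ' : Q ≤ Q') :
    (P * Q).trace ≤ (P' * Q').trace := by
  have hsplit : P' * Q' - P * Q = (P' - P) * Q' + P * (Q' - Q) := by
    simp only [Matrix.sub_mul, Matrix.mul_sub]
    abel
  rw [← sub_nonneg, ← trace_sub, hsplit, trace_add]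
  exact add_nonneg ((le_iff.mp hPP').trace_mul_nonneg (hQ.trans hQQ').posSemidef)
    (hP.posSemidef.trace_mul_nonneg (le_iff.mp hQQ'))

open scoped Matrix.Norms.L2Operator in
theorem PosDef.inv_add_le_inv [DecidableEq m] {A C : Matrix m m ℂ}
    (hA : A.PosDef) (hC : C.PosSemidef) : (A + C)⁻¹ ≤ A⁻¹ := by
  simp only [nonsing_inv_eq_ringInverse]
  exact CStarAlgebra.ringInverse_le_ringInverse (le_add_of_nonneg_right hC.nonneg)
    hA.isStrictlyPositive

end Matrix

open scoped MatrixOrder in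
theorem stmt_4 {n : ℕ} (A B C D X : Matrix (Fin n) (Fin n) ℂ)
    (hA : A.PosDef) (hB : B.PosDef) (hC : C.PosSemidef) (hD : D.PosSemidef)
    (hX : X.IsHermitian) :
    0 ≤ (X * A⁻¹ * X * B⁻¹).trace - (X * (A + C)⁻¹ * X * (B + D)⁻¹).trace := by
  have hXAX : 0 ≤ X * (A + C)⁻¹ * X :=
    IsSelfAdjoint.conjugate_nonneg (hA.add_posSemidef hC).inv.posSemidef.nonneg hX
  have hXAX_le : X * (A + C)⁻¹ * X ≤ X * A⁻¹ * X :=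
    IsSelfAdjoint.conjugate_le_conjugate (hA.inv_add_le_inv hC) hX
  exact sub_nonneg.mpr <| trace_mul_le_trace_mul hXAX hXAX_le
    (hB.add_posSemidef hD).inv.posSemidef.nonneg (hB.inv_add_le_inv hD)
end

section
/- Let A, B be positive definite Hermitian matrices and C, D positive semidefinite Hermitian matrices. Then Tr((A−B)(B⁻¹−A⁻¹) + (C−D)((B+D)⁻¹ − (A+C)⁻¹)) ≥ 0. -/
/-!
Write `P = A - B`, `Q = C - D`, `X = A + C`, `Y = B + D`. By `U⁻¹ - V⁻¹ = U⁻¹ (V - U) V⁻¹` the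
trace is `tr (P B⁻¹ P A⁻¹) + tr (Q Y⁻¹ (P + Q) X⁻¹)`. It is real, being a sum of traces of
products of two Hermitian matrices. Since inversion is antitone, `Y⁻¹ ≤ B⁻¹` and `X⁻¹ ≤ A⁻¹`, so
the first term dominates `tr (P Y⁻¹ P X⁻¹)`; and the real part of
`tr (P Y⁻¹ P X⁻¹) + tr (Q Y⁻¹ (P + Q) X⁻¹)` is nonnegative by positivity of the Hermitian form
`(P, Q) ↦ tr (P Y⁻¹ Q X⁻¹)`.
-/

open Matrix ComplexOrder
open scoped MatrixOrder

namespace Matrix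

variable {𝕜 ι : Type*} [RCLike 𝕜] [Fintype ι]

lemma PosSemidef.trace_mul_nonneg_s6 {M N : Matrix ι ι 𝕜} (hM : M.PosSemidef) (hN : N.PosSemidef) :
    0 ≤ (M * N).trace := by
  classical
  obtain ⟨S, hS, rfl⟩ : ∃ S : Matrix ι ι 𝕜, S.IsHermitian ∧ S * S = M :=
    ⟨CFC.sqrt M, (CFC.sqrt_nonneg M).posSemidef.isHermitian, CFC.sqrt_mul_sqrt_self M hM.nonneg⟩
  rw [Matrix.mul_assoc, trace_mul_comm]
  simpa [hS.eq] using (hN.mul_mul_conjTranspose_same S).trace_nonneg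

lemma PosSemidef.trace_conj_mul_nonneg {M N P : Matrix ι ι 𝕜} (hM : M.PosSemidef)
    (hN : N.PosSemidef) (hP : P.IsHermitian) : 0 ≤ (P * M * P * N).trace := by
  have hPMP := hM.mul_mul_conjTranspose_same P
  rw [hP.eq] at hPMP
  exact hPMP.trace_mul_nonneg_s6 hN

lemma IsHermitian.star_trace_mul {M N : Matrix ι ι 𝕜} (hM : M.IsHermitian) (hN : N.IsHermitian) :
    star (M * N).trace = (M * N).trace := by
  rw [← trace_conjTranspose, conjTranspose_mul, hM.eq, hN.eq, trace_mul_comm]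

lemma IsHermitian.star_trace_conj_mul {M N P Q : Matrix ι ι 𝕜} (hM : M.IsHermitian)
    (hN : N.IsHermitian) (hP : P.IsHermitian) (hQ : Q.IsHermitian) :
    star (P * M * Q * N).trace = (Q * M * P * N).trace := by
  rw [← trace_conjTranspose]
  simp only [conjTranspose_mul, hM.eq, hN.eq, hP.eq, hQ.eq, Matrix.mul_assoc]
  rw [trace_mul_comm]
  simp only [Matrix.mul_assoc]

/-- Twice the real part is `tr (P M P N) + tr (Q M Q N) + tr ((P + Q) M (P + Q) N)`, by
polarization of the positive Hermitian form `(P, Q) ↦ tr (P M Q N)`. -/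
lemma re_trace_conj_mul_add_nonneg {M N P Q : Matrix ι ι 𝕜} (hM : M.PosSemidef)
    (hN : N.PosSemidef) (hP : P.IsHermitian) (hQ : Q.IsHermitian) :
    0 ≤ RCLike.re ((P * M * P * N).trace + (Q * M * (P + Q) * N).trace) := by
  have hPQ : (P * M * Q * N).trace = star (Q * M * P * N).trace :=
    (hM.isHermitian.star_trace_conj_mul hN.isHermitian hQ hP).symm
  have hsum : ((P + Q) * M * (P + Q) * N).trace = (P * M * P * N).trace
      + (P * M * Q * N).trace + (Q * M * P * N).trace + (Q * M * Q * N).trace := by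
    simp only [add_mul, mul_add, trace_add]
    ring
  have h₁ := RCLike.nonneg_iff.mp (hM.trace_conj_mul_nonneg hN hP)
  have h₂ := RCLike.nonneg_iff.mp (hM.trace_conj_mul_nonneg hN hQ)
  have h₃ := RCLike.nonneg_iff.mp (hM.trace_conj_mul_nonneg hN (hP.add hQ))
  rw [hsum, hPQ] at h₃
  simp only [mul_add, add_mul, trace_add, map_add, RCLike.star_def, RCLike.conj_re] at h₃ ⊢
  linarith [h₁.1, h₂.1, h₃.1]

lemma trace_conj_mul_le_of_le {M M' N N' P : Matrix ι ι 𝕜} (hM : 0 ≤ M) (hN' : 0 ≤ N')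
    (hMM' : M ≤ M') (hNN' : N ≤ N') (hP : P.IsHermitian) :
    (P * M * P * N).trace ≤ (P * M' * P * N').trace := by
  have hsplit : (P * M' * P * N').trace - (P * M * P * N).trace
      = (P * (M' - M) * P * N').trace + (P * M * P * (N' - N)).trace := by
    simp only [mul_sub, sub_mul, trace_sub]
    ring
  rw [← sub_nonneg, hsplit]
  exact add_nonneg ((le_iff.mp hMM').trace_conj_mul_nonneg (nonneg_iff_posSemidef.mp hN') hP)
    ((nonneg_iff_posSemidef.mp hM).trace_conj_mul_nonneg (le_iff.mp hNN') hP)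

variable [DecidableEq ι]

lemma PosDef.inv_add_le_inv_s6 {B D : Matrix ι ι 𝕜} (hB : B.PosDef) (hD : D.PosSemidef) :
    (B + D)⁻¹ ≤ B⁻¹ := by
  have hY := hB.add_posSemidef hD
  have hBinv : B * B⁻¹ = 1 := mul_nonsing_inv B ((isUnit_iff_isUnit_det B).mp hB.isUnit)
  have hYinv : (B + D)⁻¹ * (B + D) = 1 :=
    nonsing_inv_mul _ ((isUnit_iff_isUnit_det _).mp hY.isUnit)
  have hmid : (D + D * B⁻¹ * D).PosSemidef := by
    simpa [hD.isHermitian.eq] using hD.add (hB.inv.posSemidef.conjTranspose_mul_mul_same D)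
  have hconj := hmid.mul_mul_conjTranspose_same (B + D)⁻¹
  rw [hY.isHermitian.inv.eq] at hconj
  rw [le_iff]
  convert hconj using 1
  calc B⁻¹ - (B + D)⁻¹ = B⁻¹ * D * (B + D)⁻¹ := by
        rw [inv_sub_inv (iff_of_true hB.isUnit hY.isUnit), add_sub_cancel_left]
    _ = (B + D)⁻¹ * (B + D) * B⁻¹ * D * (B + D)⁻¹ := by rw [hYinv, Matrix.one_mul]
    _ = (B + D)⁻¹ * (D + D * B⁻¹ * D) * (B + D)⁻¹ := by
        simp only [Matrix.add_mul, Matrix.mul_add, hBinv, Matrix.mul_assoc, Matrix.mul_one]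

end Matrix

theorem stmt_6 {n : ℕ} (A B C D : Matrix (Fin n) (Fin n) ℂ)
    (hA : A.PosDef) (hB : B.PosDef) (hC : C.PosSemidef) (hD : D.PosSemidef) :
    0 ≤ ((A - B) * (B⁻¹ - A⁻¹) + (C - D) * ((B + D)⁻¹ - (A + C)⁻¹)).trace := by
  have hX := hA.add_posSemidef hC
  have hY := hB.add_posSemidef hD
  have hP := hA.isHermitian.sub hB.isHermitian
  have hQ := hC.isHermitian.sub hD.isHermitian
  have hexpand : (A - B) * (B⁻¹ - A⁻¹) + (C - D) * ((B + D)⁻¹ - (A + C)⁻¹)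
      = (A - B) * B⁻¹ * (A - B) * A⁻¹
        + (C - D) * (B + D)⁻¹ * (A - B + (C - D)) * (A + C)⁻¹ := by
    rw [inv_sub_inv (iff_of_true hB.isUnit hA.isUnit),
      inv_sub_inv (iff_of_true hY.isUnit hX.isUnit), show A + C - (B + D) = A - B + (C - D) by abel]
    simp only [Matrix.mul_assoc]
  have hreal : star ((A - B) * (B⁻¹ - A⁻¹) + (C - D) * ((B + D)⁻¹ - (A + C)⁻¹)).trace
      = ((A - B) * (B⁻¹ - A⁻¹) + (C - D) * ((B + D)⁻¹ - (A + C)⁻¹)).trace := by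
    rw [trace_add, star_add, hP.star_trace_mul (hB.isHermitian.inv.sub hA.isHermitian.inv),
      hQ.star_trace_mul (hY.isHermitian.inv.sub hX.isHermitian.inv)]
  have hmono := trace_conj_mul_le_of_le hY.inv.posSemidef.nonneg hA.inv.posSemidef.nonneg
    (hB.inv_add_le_inv_s6 hD) (hA.inv_add_le_inv_s6 hC) hP
  have hform := re_trace_conj_mul_add_nonneg hY.inv.posSemidef hX.inv.posSemidef hP hQ
  refine RCLike.nonneg_iff.mpr ⟨?_, RCLike.conj_eq_iff_im.mp hreal⟩
  rw [hexpand, trace_add]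
  have hgap := (RCLike.nonneg_iff.mp (sub_nonneg.mpr hmono)).1
  simp only [map_add, map_sub] at hgap hform ⊢
  linarith
end
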